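/- Let σ = −1 and f(x) = (x² + x⁴/4)^{−3/2}. Fix n ≥ 2, masses m_1,…,m_n > 0 and a constant A > 0. Then there is at most one tuple (r, α_1,…,α_n) with r > 0 and 0 = α_1 < α_2 < … < α_n < 2π such that for every i ∈ {1,…,n}: A² = Σ_{j≠i} m_j·(1 − cos(α_j − α_i))·f(√2·r·√(1 − cos(α_j − α_i))) and 0 = Σ_{j≠i} m_j·sin(α_j − α_i)·f(√2·r·√(1 − cos(α_j − α_i))). In other words, for each fixed set of masses and fixed angular velocity there is at most one negative elliptic relative equilibrium of this polygonal class, up to rotation. -/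

import Mathlib

open Real Finset

/-!
A solution `(r, α)` of the system is a critical point of the augmented potential
`F(r, α) = ½ ∑ᵢ ∑_{j ≠ i} mᵢ mⱼ g(r² (1 - cos (αⱼ - αᵢ))) - A² (∑ᵢ mᵢ) r² / 2`,
where `g' = forceFactor`, i.e. `g(w) = -(1 + w) / √(w² + 2w)` (minus the hyperbolic cotangent of
the mutual distance); `w = r² (1 - cos θ)` is half the squared chordal distance, so the
summands of the system are the partial derivatives of the pair terms. Along the segment joining
two ordered configurations all angle differences stay in `(-2π, 2π) \ {0}`, and there every pair
term is concave: its second variation is a quadratic form in the direction with nonpositive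
discriminant. The term `-A² (∑ᵢ mᵢ) r² / 2` makes `F` strictly concave in directions that move
`r`, and a pair whose angle difference changes does so in the remaining directions that are not
rotations. The derivative of `F` along the segment vanishes at both ends, which strict concavity
forbids unless the two configurations coincide.
-/

/-- The reduced force-law factor of the curved n-body problem with `σ = −1`. -/
noncomputable def fneg (x : ℝ) : ℝ := (x ^ 2 + x ^ 4 / 4) ^ (-(3 : ℝ) / 2)

lemma quadratic_nonneg_of_discrim_nonpos {a b c : ℝ} (ha : 0 < a) (h : discrim a b c ≤ 0)
    (x y : ℝ) : 0 ≤ a * x ^ 2 + b * x * y + c * y ^ 2 := by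
  have key : 4 * a * (a * x ^ 2 + b * x * y + c * y ^ 2)
      = (2 * a * x + b * y) ^ 2 - discrim a b c * y ^ 2 := by
    rw [discrim]; ring
  have : 0 ≤ 4 * a * (a * x ^ 2 + b * x * y + c * y ^ 2) := by
    rw [key]; nlinarith [sq_nonneg (2 * a * x + b * y), sq_nonneg y]
  exact (mul_nonneg_iff_of_pos_left (by positivity)).1 this

lemma cos_sub_lt_one_of_mem_Ico {x y : ℝ} (hx : x ∈ Set.Ico 0 (2 * π)) (hy : y ∈ Set.Ico 0 (2 * π))
    (hxy : x ≠ y) : cos (y - x) < 1 :=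
  (cos_le_one _).lt_of_ne fun h => hxy (sub_eq_zero.1
    ((cos_eq_one_iff_of_lt_of_lt (by linarith [hx.2, hy.1]) (by linarith [hx.1, hy.2])).1 h)).symm

noncomputable def halfChordSq (ρ θ : ℝ) : ℝ := ρ ^ 2 * (1 - cos θ)

noncomputable def halfChordSqDeriv (ρ θ b d : ℝ) : ℝ := 2 * ρ * (1 - cos θ) * b + ρ ^ 2 * sin θ * d

noncomputable def halfChordSqDeriv2 (ρ θ b d : ℝ) : ℝ :=
  2 * (1 - cos θ) * b ^ 2 + 4 * ρ * sin θ * b * d + ρ ^ 2 * cos θ * d ^ 2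

noncomputable def forceFactor (w : ℝ) : ℝ := (2 * w + w ^ 2) ^ (-(3 : ℝ) / 2)

noncomputable def forceFactorDeriv (w : ℝ) : ℝ := -3 * (1 + w) * (2 * w + w ^ 2) ^ (-(5 : ℝ) / 2)

noncomputable def pairVariation (ρ θ b d : ℝ) : ℝ :=
  halfChordSqDeriv ρ θ b d * forceFactor (halfChordSq ρ θ)

noncomputable def pairSecondVariation (ρ θ b d : ℝ) : ℝ :=
  halfChordSqDeriv2 ρ θ b d * forceFactor (halfChordSq ρ θ)
    + halfChordSqDeriv ρ θ b d ^ 2 * forceFactorDeriv (halfChordSq ρ θ)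

lemma fneg_eq_forceFactor (ρ θ : ℝ) :
    fneg (√2 * ρ * √(1 - cos θ)) = forceFactor (halfChordSq ρ θ) := by
  have hsq : (√2 * ρ * √(1 - cos θ)) ^ 2 = 2 * halfChordSq ρ θ := by
    rw [mul_pow, mul_pow, sq_sqrt zero_le_two, sq_sqrt (sub_nonneg.2 (cos_le_one θ)),
      halfChordSq]
    ring
  rw [fneg, forceFactor, show (4 : ℕ) = 2 * 2 from rfl, pow_mul, hsq]
  ring_nf

lemma halfChordSq_pos {ρ θ : ℝ} (hρ : ρ ≠ 0) (hθ : cos θ < 1) : 0 < halfChordSq ρ θ :=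
  mul_pos (by positivity) (sub_pos.2 hθ)

lemma hasDerivAt_forceFactor {w : ℝ} (hw : 0 < w) :
    HasDerivAt forceFactor (forceFactorDeriv w) w := by
  have h : HasDerivAt (fun v => 2 * v + v ^ 2) (2 + 2 * w) w := by
    simpa using ((hasDerivAt_id w).const_mul 2).fun_add ((hasDerivAt_id w).fun_pow 2)
  have := h.rpow_const (p := -(3 : ℝ) / 2) (Or.inl (by positivity))
  rw [show -(3 : ℝ) / 2 - 1 = -(5 : ℝ) / 2 by norm_num] at this
  exact this.congr_deriv (by unfold forceFactorDeriv; ring)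

lemma hasDerivAt_halfChordSq (ρ θ b d t : ℝ) :
    HasDerivAt (fun s => halfChordSq (ρ + s * b) (θ + s * d))
      (halfChordSqDeriv (ρ + t * b) (θ + t * d) b d) t := by
  have hρ : HasDerivAt (fun s => ρ + s * b) b t := by
    simpa using ((hasDerivAt_id t).mul_const b).const_add ρ
  have hθ : HasDerivAt (fun s => θ + s * d) d t := by
    simpa using ((hasDerivAt_id t).mul_const d).const_add θ
  exact ((hρ.fun_pow 2).fun_mul (hθ.cos.const_sub 1)).congr_deriv
    (by unfold halfChordSqDeriv; push_cast; ring)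

lemma hasDerivAt_halfChordSqDeriv (ρ θ b d t : ℝ) :
    HasDerivAt (fun s => halfChordSqDeriv (ρ + s * b) (θ + s * d) b d)
      (halfChordSqDeriv2 (ρ + t * b) (θ + t * d) b d) t := by
  have hρ : HasDerivAt (fun s => ρ + s * b) b t := by
    simpa using ((hasDerivAt_id t).mul_const b).const_add ρ
  have hθ : HasDerivAt (fun s => θ + s * d) d t := by
    simpa using ((hasDerivAt_id t).mul_const d).const_add θ
  exact (((((hρ.const_mul 2).fun_mul (hθ.cos.const_sub 1)).mul_const b).add
    (((hρ.fun_pow 2).fun_mul hθ.sin).mul_const d))).congr_deriv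
    (by unfold halfChordSqDeriv2; push_cast; ring)

lemma hasDerivAt_pairVariation (ρ θ b d t : ℝ)
    (hw : 0 < halfChordSq (ρ + t * b) (θ + t * d)) :
    HasDerivAt (fun s => pairVariation (ρ + s * b) (θ + s * d) b d)
      (pairSecondVariation (ρ + t * b) (θ + t * d) b d) t := by
  unfold pairVariation
  refine ((hasDerivAt_halfChordSqDeriv ρ θ b d t).fun_mul
    ((hasDerivAt_forceFactor hw).comp t (hasDerivAt_halfChordSq ρ θ b d t))).congr_deriv ?_
  simp only [pairSecondVariation, Function.comp_apply]
  ring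

lemma forceFactor_eq_mul_rpow {w : ℝ} (hw : 0 < w) :
    forceFactor w = (2 * w + w ^ 2) * (2 * w + w ^ 2) ^ (-(5 : ℝ) / 2) := by
  rw [forceFactor, show -(3 : ℝ) / 2 = 1 + -(5 : ℝ) / 2 by norm_num,
    rpow_add (by positivity), rpow_one]

lemma pairSecondVariation_eq {ρ θ : ℝ} (hw : 0 < halfChordSq ρ θ) (b d : ℝ) :
    pairSecondVariation ρ θ b d =
      -(ρ ^ 2 * ((2 * (1 - cos θ) ^ 2 * (4 + 5 * halfChordSq ρ θ)) * b ^ 2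
        + (4 * ρ * (1 - cos θ) * (1 + 2 * halfChordSq ρ θ) * sin θ) * b * d
        + (ρ ^ 2 * (1 - cos θ) * (4 - (1 - cos θ) + halfChordSq ρ θ * (5 - 2 * (1 - cos θ))))
          * d ^ 2))
      * (2 * halfChordSq ρ θ + halfChordSq ρ θ ^ 2) ^ (-(5 : ℝ) / 2) := by
  rw [pairSecondVariation, forceFactor_eq_mul_rpow hw, forceFactorDeriv]
  simp only [halfChordSq, halfChordSqDeriv, halfChordSqDeriv2]
  linear_combination (-3 * (1 + ρ ^ 2 * (1 - cos θ)) * ρ ^ 4 * d ^ 2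
    * (2 * (ρ ^ 2 * (1 - cos θ)) + (ρ ^ 2 * (1 - cos θ)) ^ 2) ^ (-(5 : ℝ) / 2)) * sin_sq θ

lemma pairSecondVariation_nonpos {ρ θ : ℝ} (hw : 0 < halfChordSq ρ θ) (b d : ℝ) :
    pairSecondVariation ρ θ b d ≤ 0 := by
  have hu : 0 < 1 - cos θ := pos_of_mul_pos_right hw (sq_nonneg ρ)
  have hu2 : 1 - cos θ ≤ 2 := by linarith [neg_one_le_cos θ]
  have hdisc : discrim (2 * (1 - cos θ) ^ 2 * (4 + 5 * halfChordSq ρ θ))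
      (4 * ρ * (1 - cos θ) * (1 + 2 * halfChordSq ρ θ) * sin θ)
      (ρ ^ 2 * (1 - cos θ) * (4 - (1 - cos θ) + halfChordSq ρ θ * (5 - 2 * (1 - cos θ))))
      = -(8 * ρ ^ 2 * (1 - cos θ) ^ 3 * ((12 - 2 * (1 - cos θ))
        + halfChordSq ρ θ * (24 - 5 * (1 - cos θ))
        + halfChordSq ρ θ ^ 2 * (9 - 2 * (1 - cos θ)))) := by
    rw [discrim, halfChordSq]
    linear_combination (16 * ρ ^ 2 * (1 - cos θ) ^ 2 * (1 + 2 * (ρ ^ 2 * (1 - cos θ))) ^ 2)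
      * sin_sq θ
  have h1 : 0 ≤ 12 - 2 * (1 - cos θ) := by linarith
  have h2 : 0 ≤ 24 - 5 * (1 - cos θ) := by linarith
  have h3 : 0 ≤ 9 - 2 * (1 - cos θ) := by linarith
  have := hw.le
  have hQ := quadratic_nonneg_of_discrim_nonpos (by positivity)
    (hdisc.trans_le (neg_nonpos.2 (by positivity))) b d
  rw [pairSecondVariation_eq hw]
  exact mul_nonpos_of_nonpos_of_nonneg (neg_nonpos.2 (mul_nonneg (sq_nonneg ρ) hQ))
    (by positivity)

lemma pairSecondVariation_neg {ρ θ : ℝ} (hw : 0 < halfChordSq ρ θ) {d : ℝ} (hd : d ≠ 0) :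
    pairSecondVariation ρ θ 0 d < 0 := by
  have hρ : ρ ≠ 0 := by rintro rfl; simp [halfChordSq] at hw
  have hu : 0 < 1 - cos θ := pos_of_mul_pos_right hw (sq_nonneg ρ)
  have h1 : 0 < 4 - (1 - cos θ) := by linarith [neg_one_le_cos θ]
  have h2 : 0 ≤ 5 - 2 * (1 - cos θ) := by linarith [neg_one_le_cos θ]
  have := hw.le
  rw [pairSecondVariation_eq hw]
  refine mul_neg_of_neg_of_pos (neg_neg_of_pos ?_) (by positivity)
  simp only [zero_pow two_ne_zero, mul_zero, zero_mul, zero_add]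
  positivity

section Variations

variable {ι : Type*} [Fintype ι] [DecidableEq ι]

lemma sum_sum_erase_mul_sub_eq_zero (S : ι → ι → ℝ) (hanti : ∀ i j, S j i = -S i j)
    (hbal : ∀ i, ∑ j ∈ univ.erase i, S i j = 0) (δ : ι → ℝ) :
    ∑ i, ∑ j ∈ univ.erase i, S i j * (δ j - δ i) = 0 := by
  have hdiag : ∀ i, S i i = 0 := fun i => by linarith [hanti i i]
  have hrow : ∀ i, ∑ j, S i j = 0 := fun i => by rw [← sum_erase _ (hdiag i), hbal]
  have hcol : ∀ j, ∑ i, S i j = 0 := fun j => by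
    simp only [hanti j, sum_neg_distrib, hrow, neg_zero]
  calc ∑ i, ∑ j ∈ univ.erase i, S i j * (δ j - δ i)
      = ∑ i, ∑ j, S i j * (δ j - δ i) :=
        sum_congr rfl fun i _ => sum_erase _ (by rw [sub_self, mul_zero])
    _ = ∑ j, (∑ i, S i j) * δ j - ∑ i, (∑ j, S i j) * δ i := by
        simp only [mul_sub, sum_sub_distrib, sum_mul]
        rw [sum_comm (f := fun i j => S i j * δ j)]
    _ = 0 := by simp only [hrow, hcol, zero_mul, sum_const_zero, sub_zero]

def IsNegEllipticRelEq (m : ι → ℝ) (A r : ℝ) (α : ι → ℝ) : Prop :=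
  ∀ i, A ^ 2 = (∑ j ∈ univ.erase i,
      m j * (1 - cos (α j - α i)) * fneg (√2 * r * √(1 - cos (α j - α i)))) ∧
    0 = ∑ j ∈ univ.erase i, m j * sin (α j - α i) * fneg (√2 * r * √(1 - cos (α j - α i)))

/-- The derivative of the augmented potential `F` at `(r, α)` in the direction `(b, δ)`. -/
noncomputable def firstVariation (m : ι → ℝ) (A r : ℝ) (α : ι → ℝ) (b : ℝ) (δ : ι → ℝ) : ℝ :=
  (∑ i, ∑ j ∈ univ.erase i, m i * m j * pairVariation r (α j - α i) b (δ j - δ i)) / 2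
    - A ^ 2 * (∑ i, m i) * r * b

noncomputable def secondVariation (m : ι → ℝ) (A r : ℝ) (α : ι → ℝ) (b : ℝ) (δ : ι → ℝ) : ℝ :=
  (∑ i, ∑ j ∈ univ.erase i, m i * m j * pairSecondVariation r (α j - α i) b (δ j - δ i)) / 2
    - A ^ 2 * (∑ i, m i) * b ^ 2

lemma IsNegEllipticRelEq.firstVariation_eq_zero {m : ι → ℝ} {A r : ℝ} {α : ι → ℝ}
    (h : IsNegEllipticRelEq m A r α) (b : ℝ) (δ : ι → ℝ) : firstVariation m A r α b δ = 0 := by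
  have hpair : ∀ i j, m i * m j * pairVariation r (α j - α i) b (δ j - δ i)
      = 2 * r * b * m i * (m j * (1 - cos (α j - α i)) * fneg (√2 * r * √(1 - cos (α j - α i))))
        + r ^ 2 * ((m i * m j * sin (α j - α i) * fneg (√2 * r * √(1 - cos (α j - α i))))
          * (δ j - δ i)) := by
    intro i j
    rw [pairVariation, halfChordSqDeriv, fneg_eq_forceFactor]
    ring
  have hradial : ∀ i, ∑ j ∈ univ.erase i, 2 * r * b * m i
      * (m j * (1 - cos (α j - α i)) * fneg (√2 * r * √(1 - cos (α j - α i))))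
      = 2 * r * b * m i * A ^ 2 := fun i => by rw [← mul_sum, ← (h i).1]
  have hangular := sum_sum_erase_mul_sub_eq_zero
    (fun i j => m i * m j * sin (α j - α i) * fneg (√2 * r * √(1 - cos (α j - α i))))
    (fun i j => by simp only [← neg_sub (α j) (α i), sin_neg, cos_neg]; ring)
    (fun i => by
      rw [← mul_zero (m i), (h i).2, mul_sum]
      exact sum_congr rfl fun j _ => by ring) δ
  simp only [firstVariation, hpair, sum_add_distrib, hradial, ← mul_sum, hangular, ← sum_mul]
  ring

lemma hasDerivAt_firstVariation (m : ι → ℝ) (A r : ℝ) (α : ι → ℝ) (b : ℝ) (δ : ι → ℝ) (t : ℝ)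
    (hw : ∀ i j, i ≠ j → 0 < halfChordSq (r + t * b) ((α j + t * δ j) - (α i + t * δ i))) :
    HasDerivAt (fun s => firstVariation m A (r + s * b) (fun i => α i + s * δ i) b δ)
      (secondVariation m A (r + t * b) (fun i => α i + t * δ i) b δ) t := by
  have hangle : ∀ i j s, (α j + s * δ j) - (α i + s * δ i) = (α j - α i) + s * (δ j - δ i) :=
    fun i j s => by ring
  have hpair : ∀ i, ∀ j ∈ univ.erase i, HasDerivAt
      (fun s => m i * m j *
        pairVariation (r + s * b) ((α j + s * δ j) - (α i + s * δ i)) b (δ j - δ i))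
      (m i * m j *
        pairSecondVariation (r + t * b) ((α j + t * δ j) - (α i + t * δ i)) b (δ j - δ i)) t := by
    intro i j hj
    have hwij := hw i j (ne_of_mem_erase hj).symm
    rw [hangle] at hwij
    simp only [hangle i j]
    exact (hasDerivAt_pairVariation _ _ _ _ t hwij).const_mul _
  have hlin : HasDerivAt (fun s => A ^ 2 * (∑ i, m i) * (r + s * b) * b)
      (A ^ 2 * (∑ i, m i) * b ^ 2) t := by
    exact ((((hasDerivAt_id t).mul_const b).const_add r).const_mul
      (A ^ 2 * ∑ i, m i)).mul_const b |>.congr_deriv (by ring)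
  exact (((HasDerivAt.fun_sum fun i _ => HasDerivAt.fun_sum (hpair i)).div_const 2).sub hlin)

lemma secondVariation_neg [Nonempty ι] {m : ι → ℝ} {A r : ℝ} {α : ι → ℝ} {b : ℝ} {δ : ι → ℝ}
    (hm : ∀ i, 0 < m i) (hA : A ≠ 0) (hw : ∀ i j, i ≠ j → 0 < halfChordSq r (α j - α i))
    (hmove : b ≠ 0 ∨ ∃ k l, δ k ≠ δ l) : secondVariation m A r α b δ < 0 := by
  have hterm : ∀ i, ∀ j ∈ univ.erase i,
      m i * m j * pairSecondVariation r (α j - α i) b (δ j - δ i) ≤ 0 := fun i j hj =>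
    mul_nonpos_of_nonneg_of_nonpos (mul_pos (hm i) (hm j)).le
      (pairSecondVariation_nonpos (hw i j (ne_of_mem_erase hj).symm) _ _)
  have hM : 0 < ∑ i, m i := sum_pos (fun i _ => hm i) univ_nonempty
  rw [secondVariation]
  by_cases hb : b = 0
  · subst hb
    obtain ⟨k, l, hkl⟩ := hmove.resolve_left (not_not.2 rfl)
    have hlk : l ≠ k := fun h => hkl (h ▸ rfl)
    have hkl_neg : m k * m l * pairSecondVariation r (α l - α k) 0 (δ l - δ k) < 0 :=
      mul_neg_of_pos_of_neg (mul_pos (hm k) (hm l))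
        (pairSecondVariation_neg (hw k l hlk.symm) (sub_ne_zero.2 hkl.symm))
    have hsum : ∑ i, ∑ j ∈ univ.erase i,
        m i * m j * pairSecondVariation r (α j - α i) 0 (δ j - δ i) < 0 :=
      sum_neg' (fun i _ => sum_nonpos (hterm i))
        ⟨k, mem_univ k, sum_neg' (hterm k) ⟨l, mem_erase.2 ⟨hlk, mem_univ l⟩, hkl_neg⟩⟩
    linarith
  · have hsum : ∑ i, ∑ j ∈ univ.erase i,
        m i * m j * pairSecondVariation r (α j - α i) b (δ j - δ i) ≤ 0 :=
      sum_nonpos fun i _ => sum_nonpos (hterm i)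
    have : 0 < A ^ 2 * (∑ i, m i) * b ^ 2 := by positivity
    linarith

end Variations

lemma mem_Ico_of_monotone {n : ℕ} (hn : 0 < n) {β : Fin n → ℝ} (hβ : Monotone β)
    (hβ0 : β ⟨0, hn⟩ = 0) (hβ2π : ∀ i, β i < 2 * π) (i : Fin n) : β i ∈ Set.Ico 0 (2 * π) :=
  ⟨hβ0 ▸ hβ (Nat.zero_le i.val), hβ2π i⟩

lemma halfChordSq_segment_pos {ι : Type*} [LinearOrder ι] {r r' t : ℝ} {α α' : ι → ℝ}
    (hr : 0 < r) (hr' : 0 < r') (hα : StrictMono α) (hα' : StrictMono α')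
    (hαI : ∀ i, α i ∈ Set.Ico 0 (2 * π)) (hα'I : ∀ i, α' i ∈ Set.Ico 0 (2 * π))
    (ht : t ∈ Set.Icc 0 1) {i j : ι} (hij : i ≠ j) :
    0 < halfChordSq (r + t * (r' - r)) ((α j + t * (α' j - α j)) - (α i + t * (α' i - α i))) := by
  have hβ : StrictMono fun k => α k + t * (α' k - α k) := fun k l hkl => by
    have := (convex_Ioi (0 : ℝ)).add_smul_sub_mem (sub_pos.2 (hα hkl)) (sub_pos.2 (hα' hkl)) ht
    simp only [Set.mem_Ioi, smul_eq_mul] at this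
    linarith
  have hβI : ∀ k, α k + t * (α' k - α k) ∈ Set.Ico 0 (2 * π) := fun k =>
    (convex_Ico 0 (2 * π)).add_smul_sub_mem (hαI k) (hα'I k) ht
  exact halfChordSq_pos ((convex_Ioi 0).add_smul_sub_mem hr hr' ht).ne'
    (cos_sub_lt_one_of_mem_Ico (hβI i) (hβI j) (hβ.injective.ne hij))

/-- For `σ = −1`, fixed masses `m₁,…,mₙ > 0` and fixed angular velocity `A > 0`,
there is at most one tuple `(r, α₁,…,αₙ)` with `r > 0` and
`0 = α₁ < α₂ < … < αₙ < 2π` solving the polygonal negative elliptic relative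
equilibrium system
`A² = Σ_{j≠i} m_j (1 − cos(α_j−α_i)) f(√2 r √(1−cos(α_j−α_i)))`,
`0 = Σ_{j≠i} m_j sin(α_j−α_i) f(√2 r √(1−cos(α_j−α_i)))`. -/
theorem negative_elliptic_relative_equilibrium_unique
    (n : ℕ) (hn : 2 ≤ n) (m : Fin n → ℝ) (hm : ∀ i, 0 < m i)
    (A : ℝ) (hA : 0 < A)
    (r r' : ℝ) (α α' : Fin n → ℝ)
    (hr : 0 < r) (hr' : 0 < r')
    (hα0 : α ⟨0, by omega⟩ = 0) (hα'0 : α' ⟨0, by omega⟩ = 0)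
    (hαmono : StrictMono α) (hα'mono : StrictMono α')
    (hα2π : ∀ i, α i < 2 * π) (hα'2π : ∀ i, α' i < 2 * π)
    (hsys : ∀ i : Fin n,
      A ^ 2 = (∑ j ∈ Finset.univ.erase i,
          m j * (1 - Real.cos (α j - α i)) *
            fneg (Real.sqrt 2 * r * Real.sqrt (1 - Real.cos (α j - α i)))) ∧
      0 = ∑ j ∈ Finset.univ.erase i,
          m j * Real.sin (α j - α i) *
            fneg (Real.sqrt 2 * r * Real.sqrt (1 - Real.cos (α j - α i))))
    (hsys' : ∀ i : Fin n,
      A ^ 2 = (∑ j ∈ Finset.univ.erase i,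
          m j * (1 - Real.cos (α' j - α' i)) *
            fneg (Real.sqrt 2 * r' * Real.sqrt (1 - Real.cos (α' j - α' i)))) ∧
      0 = ∑ j ∈ Finset.univ.erase i,
          m j * Real.sin (α' j - α' i) *
            fneg (Real.sqrt 2 * r' * Real.sqrt (1 - Real.cos (α' j - α' i)))) :
    r = r' ∧ ∀ i, α i = α' i := by
  have hαI := mem_Ico_of_monotone (by omega) hαmono.monotone hα0 hα2π
  have hα'I := mem_Ico_of_monotone (by omega) hα'mono.monotone hα'0 hα'2π
  have hw : ∀ t ∈ Set.Icc (0 : ℝ) 1, ∀ i j, i ≠ j → 0 < halfChordSq (r + t * (r' - r))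
      ((α j + t * (α' j - α j)) - (α i + t * (α' i - α i))) := fun t ht i j hij =>
    halfChordSq_segment_pos hr hr' hαmono hα'mono hαI hα'I ht hij
  have : Nonempty (Fin n) := ⟨⟨0, by omega⟩⟩
  by_contra hne
  have hmove : r' - r ≠ 0 ∨ ∃ k l, α' k - α k ≠ α' l - α l := by
    by_contra! h
    refine hne ⟨by linarith [h.1], fun i => ?_⟩
    linarith [h.2 i ⟨0, by omega⟩, hα0, hα'0]
  let D t := firstVariation m A (r + t * (r' - r)) (fun i => α i + t * (α' i - α i))
    (r' - r) (fun i => α' i - α i)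
  have hD : ∀ t ∈ Set.Icc (0 : ℝ) 1, HasDerivAt D (secondVariation m A (r + t * (r' - r))
      (fun i => α i + t * (α' i - α i)) (r' - r) (fun i => α' i - α i)) t := fun t ht =>
    hasDerivAt_firstVariation m A r α _ _ t (hw t ht)
  have hanti : StrictAntiOn D (Set.Icc 0 1) := by
    refine strictAntiOn_of_deriv_neg (convex_Icc 0 1)
      (fun t ht => (hD t ht).continuousAt.continuousWithinAt) fun t ht => ?_
    rw [interior_Icc] at ht
    rw [(hD t (Set.Ioo_subset_Icc_self ht)).deriv]
    exact secondVariation_neg hm hA.ne' (hw t (Set.Ioo_subset_Icc_self ht)) hmove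
  have hD0 : D 0 = 0 := by
    simpa [D] using IsNegEllipticRelEq.firstVariation_eq_zero hsys (r' - r) fun i => α' i - α i
  have hD1 : D 1 = 0 := by
    simpa [D] using IsNegEllipticRelEq.firstVariation_eq_zero hsys' (r' - r) fun i => α' i - α i
  exact (hanti (Set.left_mem_Icc.2 zero_le_one) (Set.right_mem_Icc.2 zero_le_one) zero_lt_one).ne'
    (hD0.trans hD1.symm)
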